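/- arXiv:1401.0719 — 4 statements merged into one kernel-verified Lean document; each statement's English description precedes it below -/
import Mathlib

section
/- Let G be a symmetric n×n real matrix and P, Q, R diagonal n×n real matrices. For a diagonal matrix U = diag(u_1,…,u_n) with 1 − U·G invertible, set Γ = G·(1 − U·G)⁻¹, S = P·U² + 2·Q·U + R and S′ = 2·P·U + 2·Q. Then the identity (1 − G·U)·( Γ·S·Γ + ½·S′·Γ + ½·Γ·S′ + P )·(1 − U·G) = G·R·G + Q·G + G·Q + P holds. Consequently, the equation Γ·S·Γ + ½·S′·Γ + ½·Γ·S′ + P = 0 holds for all diagonal U with 1 − U·G invertible if and only if G satisfies the algebraic Riccati equation G·R·G + Q·G + G·Q + P = 0. -/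
/-!
Both identities `(1 - G U) Γ = G` and `Γ (1 - U G) = G` hold, so conjugating by `1 - G U` and
`1 - U G` turns every `Γ` into `G`. What is left differs from the Riccati expression
`G R G + Q G + G Q + P` only by `G [Q, U] G + G [P, U]`, which vanishes because diagonal
matrices commute. Taking `U = 0` gives one direction of the equivalence; for the other,
`1 - G U` is invertible together with `1 - U G` since both have the same determinant.
-/

open Matrix

theorem conj_riccati_identity {α : Type*} [Ring α] {g u p q r γ : α}
    (hγl : (1 - g * u) * γ = g) (hγr : γ * (1 - u * g) = g)
    (hup : Commute u p) (huq : Commute u q) :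
    (1 - g * u) * (γ * (p * u ^ 2 + 2 * q * u + r) * γ + (p * u + q) * γ + γ * (p * u + q) + p)
        * (1 - u * g) = g * r * g + q * g + g * q + p := by
  calc _ = (1 - g * u) * γ * (p * u ^ 2 + 2 * q * u + r) * (γ * (1 - u * g))
          + (1 - g * u) * (p * u + q) * (γ * (1 - u * g))
          + (1 - g * u) * γ * (p * u + q) * (1 - u * g) + (1 - g * u) * p * (1 - u * g) := by
        noncomm_ring
    _ = g * (p * u ^ 2 + 2 * q * u + r) * g + (1 - g * u) * (p * u + q) * g
          + g * (p * u + q) * (1 - u * g) + (1 - g * u) * p * (1 - u * g) := by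
        rw [hγl, hγr]
    _ = g * r * g + q * g + g * q + p + g * (q * u - u * q) * g + g * (p * u - u * p) := by
        noncomm_ring
    _ = _ := by simp [hup.eq, huq.eq]

theorem Matrix.IsDiag.commute {ι α : Type*} [Fintype ι] [CommSemiring α] {A B : Matrix ι ι α}
    (hA : A.IsDiag) (hB : B.IsDiag) : Commute A B := by
  classical
  rw [← hA.diagonal_diag, ← hB.diagonal_diag]
  exact commute_diagonal _ _

theorem Matrix.isUnit_one_sub_mul_comm {ι K : Type*} [Fintype ι] [DecidableEq ι] [CommRing K]
    {A B : Matrix ι ι K} (h : IsUnit (1 - A * B)) : IsUnit (1 - B * A) := by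
  rw [isUnit_iff_isUnit_det, ← det_one_sub_mul_comm]
  exact (isUnit_iff_isUnit_det _).mp h

section Riccati

variable {ι : Type*} [Fintype ι] [DecidableEq ι]

/-- `Γ S Γ + ½ S' Γ + ½ Γ S' + P` with `S = P U² + 2 Q U + R` and `S' = 2 P U + 2 Q`. -/
noncomputable def transformedRiccati (G P Q R U : Matrix ι ι ℝ) : Matrix ι ι ℝ :=
  (G * (1 - U * G)⁻¹) * (P * U ^ 2 + 2 * Q * U + R) * (G * (1 - U * G)⁻¹)
    + (1 / 2 : ℝ) • ((2 * P * U + 2 * Q) * (G * (1 - U * G)⁻¹))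
    + (1 / 2 : ℝ) • ((G * (1 - U * G)⁻¹) * (2 * P * U + 2 * Q))
    + P

theorem conj_transformedRiccati {G P Q U : Matrix ι ι ℝ} (R : Matrix ι ι ℝ)
    (hUP : Commute U P) (hUQ : Commute U Q) (hU : IsUnit (1 - U * G)) :
    (1 - G * U) * transformedRiccati G P Q R U * (1 - U * G) = G * R * G + Q * G + G * Q + P := by
  have hdet : IsUnit (1 - U * G).det := (isUnit_iff_isUnit_det _).mp hU
  rw [transformedRiccati]
  set Γ := G * (1 - U * G)⁻¹
  have hΓl : (1 - G * U) * Γ = G := by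
    rw [← mul_assoc, show (1 - G * U) * G = G * (1 - U * G) by noncomm_ring,
      mul_nonsing_inv_cancel_right _ _ hdet]
  have hΓr : Γ * (1 - U * G) = G := nonsing_inv_mul_cancel_right _ _ hdet
  have hS' : 2 * P * U + 2 * Q = (P * U + Q) + (P * U + Q) := by noncomm_ring
  have hhalf : ∀ X : Matrix ι ι ℝ, (1 / 2 : ℝ) • (X + X) = X := fun X => by module
  rw [hS', add_mul (P * U + Q), mul_add Γ (P * U + Q), hhalf, hhalf]
  exact conj_riccati_identity hΓl hΓr hUP hUQ

end Riccati

theorem stmt7_general {n : ℕ} (G P Q R : Matrix (Fin n) (Fin n) ℝ)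
    (hP : P.IsDiag) (hQ : Q.IsDiag) :
    (∀ U : Matrix (Fin n) (Fin n) ℝ, U.IsDiag → IsUnit (1 - U * G) →
      (1 - G * U) *
        ((G * (1 - U * G)⁻¹) * (P * U ^ 2 + 2 * Q * U + R) * (G * (1 - U * G)⁻¹)
          + (1 / 2 : ℝ) • ((2 * P * U + 2 * Q) * (G * (1 - U * G)⁻¹))
          + (1 / 2 : ℝ) • ((G * (1 - U * G)⁻¹) * (2 * P * U + 2 * Q))
          + P) * (1 - U * G)
        = G * R * G + Q * G + G * Q + P) ∧
    ((∀ U : Matrix (Fin n) (Fin n) ℝ, U.IsDiag → IsUnit (1 - U * G) →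
        (G * (1 - U * G)⁻¹) * (P * U ^ 2 + 2 * Q * U + R) * (G * (1 - U * G)⁻¹)
          + (1 / 2 : ℝ) • ((2 * P * U + 2 * Q) * (G * (1 - U * G)⁻¹))
          + (1 / 2 : ℝ) • ((G * (1 - U * G)⁻¹) * (2 * P * U + 2 * Q))
          + P = 0)
      ↔ G * R * G + Q * G + G * Q + P = 0) := by
  have hconj : ∀ U : Matrix (Fin n) (Fin n) ℝ, U.IsDiag → IsUnit (1 - U * G) →
      (1 - G * U) * transformedRiccati G P Q R U * (1 - U * G)
        = G * R * G + Q * G + G * Q + P :=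
    fun U hU hUG => conj_transformedRiccati R (hU.commute hP) (hU.commute hQ) hUG
  refine ⟨hconj, fun hall => ?_, fun hric U hU hUG => ?_⟩
  · have hunit : IsUnit (1 - (0 : Matrix (Fin n) (Fin n) ℝ) * G) := by simp
    have h := hconj 0 isDiag_zero hunit
    rw [transformedRiccati, hall 0 isDiag_zero hunit] at h
    simpa using h.symm
  · have h := hconj U hU hUG
    rwa [hric, mul_assoc, (isUnit_one_sub_mul_comm hUG).mul_right_eq_zero,
      hUG.mul_left_eq_zero] at h

/-- Let `G` be symmetric and `P, Q, R` diagonal.  For diagonal `U`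
with `1 - U G` invertible set `Γ = G (1 - U G)⁻¹`, `S = P U² + 2 Q U + R`,
`S' = 2 P U + 2 Q`.  Then
`(1 - G U)(Γ S Γ + ½ S' Γ + ½ Γ S' + P)(1 - U G) = G R G + Q G + G Q + P`.
Consequently `Γ S Γ + ½ S' Γ + ½ Γ S' + P = 0` holds for all such `U` iff `G`
satisfies the algebraic Riccati equation `G R G + Q G + G Q + P = 0`. -/
theorem stmt7 {n : ℕ} (G P Q R : Matrix (Fin n) (Fin n) ℝ)
    (hG : G.IsSymm) (hP : P.IsDiag) (hQ : Q.IsDiag) (hR : R.IsDiag) :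
    (∀ U : Matrix (Fin n) (Fin n) ℝ, U.IsDiag → IsUnit (1 - U * G) →
      (1 - G * U) *
        ((G * (1 - U * G)⁻¹) * (P * U ^ 2 + 2 * Q * U + R) * (G * (1 - U * G)⁻¹)
          + (1 / 2 : ℝ) • ((2 * P * U + 2 * Q) * (G * (1 - U * G)⁻¹))
          + (1 / 2 : ℝ) • ((G * (1 - U * G)⁻¹) * (2 * P * U + 2 * Q))
          + P) * (1 - U * G)
        = G * R * G + Q * G + G * Q + P) ∧
    ((∀ U : Matrix (Fin n) (Fin n) ℝ, U.IsDiag → IsUnit (1 - U * G) →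
        (G * (1 - U * G)⁻¹) * (P * U ^ 2 + 2 * Q * U + R) * (G * (1 - U * G)⁻¹)
          + (1 / 2 : ℝ) • ((2 * P * U + 2 * Q) * (G * (1 - U * G)⁻¹))
          + (1 / 2 : ℝ) • ((G * (1 - U * G)⁻¹) * (2 * P * U + 2 * Q))
          + P = 0)
      ↔ G * R * G + Q * G + G * Q + P = 0) :=
  stmt7_general G P Q R hP hQ
end

section
/- Let G be a symmetric n×n real matrix satisfying the algebraic Riccati equation G·R·G + Q·G + G·Q + P = 0 with diagonal n×n real matrices P, Q, R. Let A, B, C, D be diagonal n×n real matrices with A·D − B·C = 1 (the identity matrix) such that A + B·G is invertible, and set G̃ = (C + D·G)·(A + B·G)⁻¹. Then G̃ satisfies the algebraic Riccati equation G̃·R̃·G̃ + Q̃·G̃ + G̃·Q̃ + P̃ = 0, where P̃ = D²·P − 2·C·D·Q + C²·R, Q̃ = −B·D·P + (A·D + B·C)·Q − A·C·R, and R̃ = B²·P − 2·A·B·Q + A²·R. -/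
/-!
Write `M = A + B G` and `N = C + D G`, so that `G̃ = N M⁻¹`. As the coefficients are diagonal and
`G` is symmetric, `Mᵀ = A + G B`, and `A D - B C = 1` gives `Mᵀ N = Nᵀ M`, i.e. `Mᵀ G̃ = Nᵀ`. Hence
`Mᵀ Ric̃(G̃) M = Nᵀ R̃ N + Mᵀ Q̃ N + Nᵀ Q̃ M + Mᵀ P̃ M`, which expands back to `Ric(G)` because the
new coefficient matrix `H̃ = !![P̃, Q̃; Q̃, R̃]` satisfies `Tᵀ H̃ T = (det T)² H` for
`T = !![A, B; C, D]` and `H = !![P, Q; Q, R]`.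

Only the commutativity of the coefficients matters, so they are taken to be the image of a
commutative ring under a ring hom (here `Matrix.diagonalRingHom`).
-/

open Matrix

section Mobius

variable {S : Type*} [CommRing S] (a b c d p q r : S)

def mobiusP : S := d ^ 2 * p - 2 * c * d * q + c ^ 2 * r

def mobiusQ : S := -(b * d * p) + (a * d + b * c) * q - a * c * r

def mobiusR : S := b ^ 2 * p - 2 * a * b * q + a ^ 2 * r

/-- `Tᵀ H̃ T = (det T)² H` for `T = !![a, b; c, d]` and `H = !![p, q; q, r]`, expanded over the
entries of `H̃`; the Möbius coefficients come from `H̃ = adj(T)ᵀ H adj(T)`. -/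
lemma mobius_congr :
    vecMulVec ![c, d] (mobiusR a b p q r • ![c, d]) +
        vecMulVec ![a, b] (mobiusQ a b c d p q r • ![c, d]) +
        vecMulVec ![c, d] (mobiusQ a b c d p q r • ![a, b]) +
        vecMulVec ![a, b] (mobiusP c d p q r • ![a, b]) =
      (a * d - b * c) ^ 2 • !![p, q; q, r] := by
  ext i j
  fin_cases i <;> fin_cases j <;>
    simp [mobiusP, mobiusQ, mobiusR] <;> ring

lemma vecMulVec_eq_vecMulVec_swap_add :
    vecMulVec ![a, b] ![c, d] = vecMulVec ![c, d] ![a, b] + (a * d - b * c) • !![0, 1; -1, 0] := by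
  ext i j
  fin_cases i <;> fin_cases j <;> simp [vecMulVec_apply] <;> ring

end Mobius

section Riccati

variable {S α : Type*} [CommRing S] [Ring α] (φ : S →+* α)

def riccati (p q r g : α) : α := g * r * g + q * g + g * q + p

/-- `[1, g] φ(K) [1; g]` for a `2 × 2` coefficient matrix `K` over `S`. -/
def riccatiForm (g : α) (K : Matrix (Fin 2) (Fin 2) S) : α :=
  φ (K 0 0) + φ (K 0 1) * g + g * φ (K 1 0) + g * φ (K 1 1) * g

lemma riccatiForm_add (g : α) (K L : Matrix (Fin 2) (Fin 2) S) :
    riccatiForm φ g (K + L) = riccatiForm φ g K + riccatiForm φ g L := by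
  simp only [riccatiForm, Matrix.add_apply, map_add]
  noncomm_ring

lemma riccati_eq_riccatiForm (p q r : S) (g : α) :
    riccati (φ p) (φ q) (φ r) g = riccatiForm φ g !![p, q; q, r] := by
  simp only [riccati, riccatiForm, of_apply, cons_val', cons_val_zero, cons_val_one,
    empty_val', cons_val_fin_one]
  noncomm_ring

lemma mul_eq_riccatiForm (a b c d : S) (g : α) :
    (φ a + g * φ b) * (φ c + φ d * g) = riccatiForm φ g (vecMulVec ![a, b] ![c, d]) := by
  simp only [riccatiForm, vecMulVec_apply, cons_val_zero, cons_val_one, map_mul]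
  noncomm_ring

lemma mul_map_mul_eq_riccatiForm (a b x c d : S) (g : α) :
    (φ a + g * φ b) * φ x * (φ c + φ d * g) =
      riccatiForm φ g (vecMulVec ![a, b] (x • ![c, d])) := by
  rw [smul_cons, smul_cons, smul_empty, ← mul_eq_riccatiForm, mul_assoc, mul_add,
    ← mul_assoc (φ x), smul_eq_mul, smul_eq_mul, map_mul, map_mul]

lemma riccati_conj {p q r g m m' n n' : α} (hleft : m' * g = n') (hright : g * m = n) :
    m' * riccati p q r g * m = n' * r * n + m' * q * n + n' * q * m + m' * p * m := by
  subst hleft hright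
  simp only [riccati]
  noncomm_ring

lemma riccatiForm_symplectic (g : α) : riccatiForm φ g !![0, 1; -1, 0] = 0 := by
  simp [riccatiForm]

variable {φ} {a b c d : S}

lemma add_mul_add_comm_of_det_eq_one (hdet : a * d - b * c = 1) (g : α) :
    (φ a + g * φ b) * (φ c + φ d * g) = (φ c + g * φ d) * (φ a + φ b * g) := by
  rw [mul_eq_riccatiForm, mul_eq_riccatiForm, vecMulVec_eq_vecMulVec_swap_add, hdet, one_smul,
    riccatiForm_add, riccatiForm_symplectic, add_zero]

theorem riccati_mobius {p q r : S} {g g' : α} (hdet : a * d - b * c = 1)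
    (hm : IsUnit (φ a + φ b * g)) (hm' : IsUnit (φ a + g * φ b))
    (hg' : g' * (φ a + φ b * g) = φ c + φ d * g)
    (hric : riccati (φ p) (φ q) (φ r) g = 0) :
    riccati (φ (mobiusP c d p q r)) (φ (mobiusQ a b c d p q r)) (φ (mobiusR a b p q r)) g' = 0 := by
  have hleft : (φ a + g * φ b) * g' = φ c + g * φ d := by
    rw [← hm.mul_left_inj, mul_assoc, hg', add_mul_add_comm_of_det_eq_one hdet]
  rw [← hm'.mul_right_eq_zero, ← hm.mul_left_eq_zero, riccati_conj hleft hg',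
    mul_map_mul_eq_riccatiForm, mul_map_mul_eq_riccatiForm, mul_map_mul_eq_riccatiForm,
    mul_map_mul_eq_riccatiForm, ← riccatiForm_add, ← riccatiForm_add, ← riccatiForm_add,
    mobius_congr, hdet, one_pow, one_smul, ← riccati_eq_riccatiForm, hric]

end Riccati

lemma Matrix.transpose_add_mul_of_isSymm {m K : Type*} [Fintype m] [CommRing K]
    {A B G : Matrix m m K} (hA : A.IsSymm) (hB : B.IsSymm) (hG : G.IsSymm) :
    (A + B * G)ᵀ = A + G * B := by
  rw [transpose_add, transpose_mul, hA.eq, hB.eq, hG.eq]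

/-- If a symmetric matrix `G` satisfies the algebraic Riccati
equation `G R G + Q G + G Q + P = 0` with diagonal `P, Q, R`, and `A, B, C, D` are
diagonal with `A D - B C = 1` and `A + B G` invertible, then the equivalent matrix
`G̃ = (C + D G)(A + B G)⁻¹` satisfies `G̃ R̃ G̃ + Q̃ G̃ + G̃ Q̃ + P̃ = 0` with
`P̃ = D² P - 2 C D Q + C² R`, `Q̃ = -B D P + (A D + B C) Q - A C R`,
`R̃ = B² P - 2 A B Q + A² R`. -/
theorem stmt8 {n : ℕ} (G P Q R A B C D : Matrix (Fin n) (Fin n) ℝ)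
    (hG : G.IsSymm)
    (hP : P.IsDiag) (hQ : Q.IsDiag) (hR : R.IsDiag)
    (hA : A.IsDiag) (hB : B.IsDiag) (hC : C.IsDiag) (hD : D.IsDiag)
    (hRic : G * R * G + Q * G + G * Q + P = 0)
    (hABCD : A * D - B * C = 1)
    (h : IsUnit (A + B * G))
    (Gt Pt Qt Rt : Matrix (Fin n) (Fin n) ℝ)
    (hGt : Gt = (C + D * G) * (A + B * G)⁻¹)
    (hPt : Pt = D ^ 2 * P - 2 * C * D * Q + C ^ 2 * R)
    (hQt : Qt = -(B * D * P) + (A * D + B * C) * Q - A * C * R)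
    (hRt : Rt = B ^ 2 * P - 2 * A * B * Q + A ^ 2 * R) :
    Gt * Rt * Gt + Qt * Gt + Gt * Qt + Pt = 0 := by
  have h' : IsUnit (A + G * B) := by
    rwa [← transpose_add_mul_of_isSymm hA.isSymm hB.isSymm hG, isUnit_transpose]
  have hGt' : Gt * (A + B * G) = C + D * G := by
    rw [hGt, nonsing_inv_mul_cancel_right _ _ ((isUnit_iff_isUnit_det _).mp h)]
  let φ := diagonalRingHom (Fin n) ℝ
  obtain ⟨p, rfl⟩ : ∃ x, φ x = P := ⟨_, hP.diagonal_diag⟩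
  obtain ⟨q, rfl⟩ : ∃ x, φ x = Q := ⟨_, hQ.diagonal_diag⟩
  obtain ⟨r, rfl⟩ : ∃ x, φ x = R := ⟨_, hR.diagonal_diag⟩
  obtain ⟨a, rfl⟩ : ∃ x, φ x = A := ⟨_, hA.diagonal_diag⟩
  obtain ⟨b, rfl⟩ : ∃ x, φ x = B := ⟨_, hB.diagonal_diag⟩
  obtain ⟨c, rfl⟩ : ∃ x, φ x = C := ⟨_, hC.diagonal_diag⟩
  obtain ⟨d, rfl⟩ : ∃ x, φ x = D := ⟨_, hD.diagonal_diag⟩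
  have hdet : a * d - b * c = 1 :=
    diagonal_injective (show φ (a * d - b * c) = φ 1 by rwa [map_sub, map_mul, map_mul, map_one])
  have hmob := riccati_mobius hdet h h' hGt' hRic
  simp only [riccati, mobiusP, mobiusQ, mobiusR, map_sub, map_add, map_mul, map_neg, map_pow,
    map_ofNat] at hmob
  rwa [hPt, hQt, hRt]
end

section
/- Let ρ be a nonzero real number and G a symmetric n×n real matrix with G² = ρ²·1 (1 the identity matrix). For u = (u_1,…,u_n) in an open subset of ℝⁿ on which the matrix 1 − (1/ρ)·tanh(ρU)·G is invertible, where U = diag(u_1,…,u_n) and tanh(ρU) = diag(tanh ρu_1,…,tanh ρu_n), define for i ≠ j the functions γ_ij(u) = [ G·(1 − (1/ρ)·tanh(ρU)·G)⁻¹ ]_{ij} / ( cosh(ρu_i)·cosh(ρu_j) ). Then these functions satisfy the Darboux–Egorov equations: ∂γ_ij/∂u_k = γ_ik·γ_kj for pairwise distinct i, j, k, and Σ_{k=1}^n ∂γ_ij/∂u_k = 0 for all i ≠ j. -/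
/-!
Write `T = tanh(ρU)`, `M = 1 - ρ⁻¹ T G` and `Γ = G M⁻¹`, so that
`γ_ij = Γ_ij / (cosh ρuᵢ cosh ρuⱼ)`. Since `∂ₖ T = ρ sech²(ρuₖ) Eₖₖ`, differentiating the inverse
gives `∂ₖ Γ = sech²(ρuₖ) Γ Eₖₖ Γ`; distributing the `cosh` factors, this is `∂ₖ γ_ij = γ_ik γ_kj`
for `k ∉ {i, j}`. Summing over `k` produces `Γ (1 - T²) Γ`, and from `G² = ρ²` and the
push-through identity `G M⁻¹ = (1 - ρ⁻¹ G T)⁻¹ G` one gets `Γ (1 - T²) Γ = ρ (T Γ + Γ T) + ρ²`.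
Off the diagonal the right-hand side is exactly what the derivatives of the `cosh` factors cancel.
-/

open Matrix Function

section Algebra

variable {K m ι : Type*} [Fintype m] [Fintype ι] [DecidableEq m] [DecidableEq ι]

theorem Matrix.mul_inv_one_sub_mul_comm [CommRing K] (A : Matrix m ι K) (B : Matrix ι m K) :
    A * (1 - B * A)⁻¹ = (1 - A * B)⁻¹ * A := by
  by_cases h : IsUnit (1 - B * A).det
  · have h' : IsUnit (1 - A * B).det := by rwa [det_one_sub_mul_comm]
    have hcomm : (1 - A * B) * A = A * (1 - B * A) := by
      rw [Matrix.sub_mul, Matrix.mul_sub, Matrix.one_mul, Matrix.mul_one, Matrix.mul_assoc]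
    calc A * (1 - B * A)⁻¹ = (1 - A * B)⁻¹ * ((1 - A * B) * A) * (1 - B * A)⁻¹ := by
          rw [← Matrix.mul_assoc, nonsing_inv_mul _ h', Matrix.one_mul]
      _ = (1 - A * B)⁻¹ * A := by
          rw [hcomm, Matrix.mul_assoc, Matrix.mul_assoc, mul_nonsing_inv _ h, Matrix.mul_one]
  · have h' : ¬IsUnit (1 - A * B).det := by rwa [det_one_sub_mul_comm]
    rw [nonsing_inv_apply_not_isUnit _ h, nonsing_inv_apply_not_isUnit _ h', Matrix.mul_zero,
      Matrix.zero_mul]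

noncomputable def gammaMatrix [CommRing K] (c : K) (G T : Matrix ι ι K) : Matrix ι ι K :=
  G * (1 - c • T * G)⁻¹

variable [Field K] {ρ : K} {G : Matrix ι ι K}

theorem gammaMatrix_mul_one_sub_mul_gammaMatrix {T : Matrix ι ι K} (hρ : ρ ≠ 0)
    (hG : G * G = ρ ^ 2 • (1 : Matrix ι ι K)) (hT : IsUnit (1 - ρ⁻¹ • T * G)) :
    gammaMatrix ρ⁻¹ G T * (1 - T * T) * gammaMatrix ρ⁻¹ G T =
      ρ • (T * gammaMatrix ρ⁻¹ G T + gammaMatrix ρ⁻¹ G T * T) + ρ ^ 2 • 1 := by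
  set M := 1 - ρ⁻¹ • T * G
  set N := 1 - G * (ρ⁻¹ • T)
  have hM : IsUnit M.det := (isUnit_iff_isUnit_det M).mp hT
  have hN : IsUnit N.det := by rwa [det_one_sub_mul_comm]
  have hΓ : gammaMatrix ρ⁻¹ G T = G * M⁻¹ := rfl
  have hΓ' : gammaMatrix ρ⁻¹ G T = N⁻¹ * G := mul_inv_one_sub_mul_comm G (ρ⁻¹ • T)
  have hTG : T * G = ρ • (1 - M) := by
    simp only [M, sub_sub_cancel, Matrix.smul_mul, smul_smul, mul_inv_cancel₀ hρ, one_smul]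
  have hGT : G * T = ρ • (1 - N) := by
    simp only [N, sub_sub_cancel, Matrix.mul_smul, smul_smul, mul_inv_cancel₀ hρ, one_smul]
  have hTΓ : T * gammaMatrix ρ⁻¹ G T = ρ • (M⁻¹ - 1) := by
    rw [hΓ, ← Matrix.mul_assoc, hTG, Matrix.smul_mul, Matrix.sub_mul, Matrix.one_mul,
      mul_nonsing_inv _ hM]
  have hΓT : gammaMatrix ρ⁻¹ G T * T = ρ • (N⁻¹ - 1) := by
    rw [hΓ', Matrix.mul_assoc, hGT, Matrix.mul_smul, Matrix.mul_sub, Matrix.mul_one,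
      nonsing_inv_mul _ hN]
  have hΓΓ : gammaMatrix ρ⁻¹ G T * gammaMatrix ρ⁻¹ G T = ρ ^ 2 • (N⁻¹ * M⁻¹) := by
    calc gammaMatrix ρ⁻¹ G T * gammaMatrix ρ⁻¹ G T = N⁻¹ * G * (G * M⁻¹) := by
          nth_rw 1 [hΓ']; rw [hΓ]
      _ = ρ ^ 2 • (N⁻¹ * M⁻¹) := by
          rw [Matrix.mul_assoc, ← Matrix.mul_assoc G, hG, Matrix.smul_mul, Matrix.one_mul,
            Matrix.mul_smul]
  calc gammaMatrix ρ⁻¹ G T * (1 - T * T) * gammaMatrix ρ⁻¹ G T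
      = gammaMatrix ρ⁻¹ G T * gammaMatrix ρ⁻¹ G T
        - (gammaMatrix ρ⁻¹ G T * T) * (T * gammaMatrix ρ⁻¹ G T) := by noncomm_ring
    _ = ρ • (T * gammaMatrix ρ⁻¹ G T + gammaMatrix ρ⁻¹ G T * T) + ρ ^ 2 • 1 := by
      rw [hΓΓ, hΓT, hTΓ, smul_mul_smul, ← sq]
      simp only [Matrix.sub_mul, Matrix.mul_sub, Matrix.one_mul, Matrix.mul_one]
      module

theorem sum_gammaMatrix_diagonal_mul_of_ne {d : ι → K} (hρ : ρ ≠ 0)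
    (hG : G * G = ρ ^ 2 • (1 : Matrix ι ι K)) (hd : IsUnit (1 - ρ⁻¹ • diagonal d * G))
    {i j : ι} (hij : i ≠ j) :
    ∑ k, gammaMatrix ρ⁻¹ G (diagonal d) i k * (1 - d k ^ 2) * gammaMatrix ρ⁻¹ G (diagonal d) k j =
      ρ * (d i + d j) * gammaMatrix ρ⁻¹ G (diagonal d) i j := by
  have h := congr_fun₂ (gammaMatrix_mul_one_sub_mul_gammaMatrix hρ hG hd) i j
  rw [diagonal_mul_diagonal, ← diagonal_one, diagonal_sub, Matrix.mul_apply] at h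
  simp only [Matrix.add_apply, Matrix.smul_apply, diagonal_mul, mul_diagonal,
    diagonal_apply_ne _ hij, smul_eq_mul, ← sq] at h
  rw [h]
  ring

end Algebra

section ScalarCalculus

variable {𝕜 : Type*} [NontriviallyNormedField 𝕜] {x : 𝕜}

theorem HasDerivAt.ringInverse {R : Type*} [NormedRing R] [HasSummableGeomSeries R]
    [NormedAlgebra 𝕜 R] {A : 𝕜 → R} {A' : R} (hA : HasDerivAt A A' x) (hx : IsUnit (A x)) :
    HasDerivAt (fun t => Ring.inverse (A t)) (-(Ring.inverse (A x) * A' * Ring.inverse (A x)))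
      x := by
  obtain ⟨v, hv⟩ := hx
  have hinv := hasFDerivAt_ringInverse (𝕜 := 𝕜) v
  rw [← Ring.inverse_unit, hv] at hinv
  exact (hinv.comp_hasDerivAt x hA).congr_deriv (by simp)

theorem HasDerivAt.comp_update_apply {ι F : Type*} [DecidableEq ι] [NormedAddCommGroup F]
    [NormedSpace 𝕜 F] {f : 𝕜 → F} {f' : F} (u : ι → 𝕜) (k : ι) {l : ι}
    (hf : HasDerivAt f f' (u l)) :
    HasDerivAt (fun t => f (update u k t l)) ((Pi.single k 1 : ι → 𝕜) l • f') (u k) := by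
  have hl : HasDerivAt (fun t => update u k t l) ((Pi.single k 1 : ι → 𝕜) l) (u k) :=
    hasDerivAt_pi.1 (hasDerivAt_update u k (u k)) l
  rw [← update_eq_self k u] at hf
  exact hf.scomp (u k) hl

end ScalarCalculus

namespace Real

theorem hasDerivAt_tanh (x : ℝ) : HasDerivAt tanh (1 - tanh x ^ 2) x := by
  have h := (hasDerivAt_sinh x).div (hasDerivAt_cosh x) (cosh_pos x).ne'
  rw [show sinh / cosh = tanh from funext fun y => (tanh_eq_sinh_div_cosh y).symm] at h
  refine h.congr_deriv ?_
  have hc := (cosh_pos x).ne'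
  rw [tanh_eq_sinh_div_cosh]
  field_simp

theorem hasDerivAt_tanh_mul (ρ x : ℝ) :
    HasDerivAt (fun t => tanh (ρ * t)) (ρ * (1 - tanh (ρ * x) ^ 2)) x :=
  ((hasDerivAt_tanh (ρ * x)).comp x ((hasDerivAt_id' x).const_mul ρ)).congr_deriv (by ring)

theorem hasDerivAt_inv_cosh_mul (ρ x : ℝ) :
    HasDerivAt (fun t => (cosh (ρ * t))⁻¹) (-(ρ * tanh (ρ * x)) * (cosh (ρ * x))⁻¹) x := by
  have hc := (cosh_pos (ρ * x)).ne'
  refine (((hasDerivAt_cosh (ρ * x)).comp x ((hasDerivAt_id' x).const_mul ρ)).inv hc).congr_deriv ?_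
  rw [Function.comp_apply, tanh_eq_sinh_div_cosh]
  field_simp

end Real

section MatrixCalculus

/- Matrices carry the `L∞` operator norm here: it makes them a normed algebra, as
`hasFDerivAt_ringInverse` needs, and all norms on them give the same derivatives. -/
attribute [local instance] Matrix.linftyOpNormedRing Matrix.linftyOpNormedAlgebra

variable {𝕜 ι : Type*} [RCLike 𝕜] [Fintype ι] [DecidableEq ι] {x : 𝕜}

theorem HasDerivAt.matrix_apply {A : 𝕜 → Matrix ι ι 𝕜} {A' : Matrix ι ι 𝕜}
    (hA : HasDerivAt A A' x) (i j : ι) : HasDerivAt (fun t => A t i j) (A' i j) x :=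
  (entryLinearMap 𝕜 𝕜 i j).toContinuousLinearMap.hasFDerivAt.comp_hasDerivAt x hA

theorem HasDerivAt.matrix_diagonal {d : 𝕜 → ι → 𝕜} {d' : ι → 𝕜} (hd : HasDerivAt d d' x) :
    HasDerivAt (fun t => diagonal (d t)) (diagonal d') x :=
  (diagonalLinearMap ι 𝕜 𝕜).toContinuousLinearMap.hasFDerivAt.comp_hasDerivAt x hd

theorem HasDerivAt.gammaMatrix {c : 𝕜} {G : Matrix ι ι 𝕜} {T : 𝕜 → Matrix ι ι 𝕜}
    {T' : Matrix ι ι 𝕜} (hT : HasDerivAt T T' x) (hx : IsUnit (1 - c • T x * G)) :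
    HasDerivAt (fun t => gammaMatrix c G (T t))
      (c • (gammaMatrix c G (T x) * T' * gammaMatrix c G (T x))) x := by
  have hM : HasDerivAt (fun t => 1 - c • T t * G) (-(c • T' * G)) x :=
    ((hT.const_smul c).mul_const G).const_sub 1
  have hinv := (hM.ringInverse hx).const_mul G
  simp only [← nonsing_inv_eq_ringInverse] at hinv
  refine hinv.congr_deriv ?_
  simp only [_root_.gammaMatrix, Matrix.mul_neg, Matrix.neg_mul, neg_neg, Matrix.smul_mul,
    Matrix.mul_smul, Matrix.mul_assoc]

end MatrixCalculus

section RotationCoefficients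

open Real

variable {ι : Type*} [Fintype ι] [DecidableEq ι]

noncomputable def rotationCoeff (ρ : ℝ) (G : Matrix ι ι ℝ) (u : ι → ℝ) (i j : ι) : ℝ :=
  gammaMatrix ρ⁻¹ G (diagonal fun l => tanh (ρ * u l)) i j / (cosh (ρ * u i) * cosh (ρ * u j))

noncomputable def rotationCoeffPartial (ρ : ℝ) (G : Matrix ι ι ℝ) (u : ι → ℝ) (i j k : ι) : ℝ :=
  (gammaMatrix ρ⁻¹ G (diagonal fun l => tanh (ρ * u l)) i k * (1 - tanh (ρ * u k) ^ 2) *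
      gammaMatrix ρ⁻¹ G (diagonal fun l => tanh (ρ * u l)) k j
    - ρ * ((Pi.single k 1 : ι → ℝ) i * tanh (ρ * u i) +
        (Pi.single k 1 : ι → ℝ) j * tanh (ρ * u j)) *
      gammaMatrix ρ⁻¹ G (diagonal fun l => tanh (ρ * u l)) i j) /
    (cosh (ρ * u i) * cosh (ρ * u j))

variable {ρ : ℝ} {G : Matrix ι ι ℝ} {u : ι → ℝ}

theorem hasDerivAt_rotationCoeff_update (hρ : ρ ≠ 0)
    (hu : IsUnit (1 - ρ⁻¹ • diagonal (fun l => tanh (ρ * u l)) * G)) (i j k : ι) :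
    HasDerivAt (fun t => rotationCoeff ρ G (update u k t) i j)
      (rotationCoeffPartial ρ G u i j k) (u k) := by
  have hd : HasDerivAt (fun t l => tanh (ρ * update u k t l))
      (fun l => (Pi.single k 1 : ι → ℝ) l • (ρ * (1 - tanh (ρ * u l) ^ 2))) (u k) :=
    hasDerivAt_pi.2 fun l => (hasDerivAt_tanh_mul ρ (u l)).comp_update_apply u k
  have hΓ :=
    (hd.matrix_diagonal.gammaMatrix (G := G) (c := ρ⁻¹) (by simpa using hu)).matrix_apply i j
  have hsech (l : ι) := (hasDerivAt_inv_cosh_mul ρ (u l)).comp_update_apply u k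
  have hfun : (fun t => rotationCoeff ρ G (update u k t) i j) =
      (fun t => gammaMatrix ρ⁻¹ G (diagonal fun l => tanh (ρ * update u k t l)) i j) *
        ((fun t => (cosh (ρ * update u k t i))⁻¹) * fun t => (cosh (ρ * update u k t j))⁻¹) := by
    funext t
    simp only [Pi.mul_apply, rotationCoeff, div_eq_mul_inv, mul_inv]
  rw [hfun]
  refine (hΓ.mul ((hsech i).mul (hsech j))).congr_deriv ?_
  have hc (l : ι) : cosh (ρ * u l) ≠ 0 := (cosh_pos _).ne'
  rw [Matrix.smul_apply, Matrix.mul_apply]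
  simp only [mul_diagonal]
  rw [Fintype.sum_eq_single k fun l hl => by simp [Pi.single_eq_of_ne hl]]
  simp only [Pi.single_eq_same, update_eq_self, Pi.mul_apply, rotationCoeffPartial, smul_eq_mul]
  field_simp
  ring

theorem rotationCoeffPartial_of_ne {i j k : ι} (hki : k ≠ i) (hkj : k ≠ j) :
    rotationCoeffPartial ρ G u i j k = rotationCoeff ρ G u i k * rotationCoeff ρ G u k j := by
  have hcosh (l : ι) : cosh (ρ * u l) ≠ 0 := (cosh_pos _).ne'
  have hsech : 1 - tanh (ρ * u k) ^ 2 = (cosh (ρ * u k) ^ 2)⁻¹ := by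
    rw [tanh_eq_sinh_div_cosh]
    field_simp
    linear_combination cosh_sq_sub_sinh_sq (ρ * u k)
  simp only [rotationCoeffPartial, rotationCoeff, Pi.single_eq_of_ne' hki, Pi.single_eq_of_ne' hkj,
    hsech]
  field_simp
  ring

theorem sum_rotationCoeffPartial (hρ : ρ ≠ 0) (hG : G * G = ρ ^ 2 • (1 : Matrix ι ι ℝ))
    (hu : IsUnit (1 - ρ⁻¹ • diagonal (fun l => tanh (ρ * u l)) * G)) {i j : ι} (hij : i ≠ j) :
    ∑ k, rotationCoeffPartial ρ G u i j k = 0 := by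
  simp only [rotationCoeffPartial, ← Finset.sum_div, Finset.sum_sub_distrib, ← Finset.sum_mul,
    ← Finset.mul_sum, Finset.sum_add_distrib, Fintype.sum_pi_single,
    sum_gammaMatrix_diagonal_mul_of_ne hρ hG hu hij, one_mul, sub_self, zero_div]

end RotationCoefficients

theorem stmt12_general {n : ℕ} (ρ : ℝ) (hρ : ρ ≠ 0)
    (G : Matrix (Fin n) (Fin n) ℝ)
    (hG2 : G * G = (ρ ^ 2 : ℝ) • (1 : Matrix (Fin n) (Fin n) ℝ))
    (γ : (Fin n → ℝ) → Fin n → Fin n → ℝ)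
    (hγ : ∀ u : Fin n → ℝ, ∀ i j : Fin n, i ≠ j →
      γ u i j =
        (G * (1 - ρ⁻¹ •
            Matrix.diagonal (fun k => Real.tanh (ρ * u k)) * G)⁻¹) i j
          / (Real.cosh (ρ * u i) * Real.cosh (ρ * u j))) :
    ∀ u : Fin n → ℝ,
      IsUnit (1 - ρ⁻¹ • Matrix.diagonal (fun k => Real.tanh (ρ * u k)) * G) →
      ∀ i j : Fin n, i ≠ j →
        ∃ D : Fin n → ℝ,
          (∀ k : Fin n,
            HasDerivAt (fun t : ℝ => γ (Function.update u k t) i j) (D k) (u k)) ∧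
          (∀ k : Fin n, k ≠ i → k ≠ j → D k = γ u i k * γ u k j) ∧
          ∑ k, D k = 0 := by
  intro u hu i j hij
  have hγ' : ∀ v a b, a ≠ b → γ v a b = rotationCoeff ρ G v a b := hγ
  refine ⟨rotationCoeffPartial ρ G u i j, fun k => ?_, fun k hki hkj => ?_,
    sum_rotationCoeffPartial hρ hG2 hu hij⟩
  · simpa only [hγ' _ _ _ hij] using hasDerivAt_rotationCoeff_update hρ hu i j k
  · rw [hγ' u i k hki.symm, hγ' u k j hkj]
    exact rotationCoeffPartial_of_ne hki hkj

/-- Let `ρ ≠ 0` and `G` symmetric with `G² = ρ² 1`.  On the open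
set where `1 - (1/ρ) tanh(ρU) G` is invertible, `U = diag u`, define for `i ≠ j`
`γ_ij(u) = [G (1 - (1/ρ) tanh(ρU) G)⁻¹]_{ij} / (cosh ρuᵢ cosh ρuⱼ)`.  Then these
functions satisfy the Darboux–Egorov equations: `∂γ_ij/∂uₖ = γ_ik γ_kj` for
pairwise distinct `i, j, k`, and `∑ₖ ∂γ_ij/∂uₖ = 0` for all `i ≠ j`. -/
theorem stmt12 {n : ℕ} (ρ : ℝ) (hρ : ρ ≠ 0)
    (G : Matrix (Fin n) (Fin n) ℝ) (hG : G.IsSymm)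
    (hG2 : G * G = (ρ ^ 2 : ℝ) • (1 : Matrix (Fin n) (Fin n) ℝ))
    (γ : (Fin n → ℝ) → Fin n → Fin n → ℝ)
    (hγ : ∀ u : Fin n → ℝ, ∀ i j : Fin n, i ≠ j →
      γ u i j =
        (G * (1 - ρ⁻¹ •
            Matrix.diagonal (fun k => Real.tanh (ρ * u k)) * G)⁻¹) i j
          / (Real.cosh (ρ * u i) * Real.cosh (ρ * u j))) :
    ∀ u : Fin n → ℝ,
      IsUnit (1 - ρ⁻¹ • Matrix.diagonal (fun k => Real.tanh (ρ * u k)) * G) →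
      ∀ i j : Fin n, i ≠ j →
        ∃ D : Fin n → ℝ,
          (∀ k : Fin n,
            HasDerivAt (fun t : ℝ => γ (Function.update u k t) i j) (D k) (u k)) ∧
          (∀ k : Fin n, k ≠ i → k ≠ j → D k = γ u i k * γ u k j) ∧
          ∑ k, D k = 0 :=
  stmt12_general ρ hρ G hG2 γ hγ
end

section
/- For u = (u_1,…,u_n) ∈ ℝⁿ set D(u) = Σ_{k=1}^n e^{−u_k}, γ_ij(u) = e^{−(u_i+u_j)/2}/D(u) for i ≠ j, and define the n×n matrix-valued function ψ(u) by ψ_ii(u) = 2e^{−u_i}/D(u) − 1 and ψ_ij(u) = 2e^{−(u_i+u_j)/2}/D(u) for i ≠ j. Then for every fixed column index α and all i ≠ j one has ∂ψ_iα/∂u_j = γ_ij·ψ_jα, and Σ_{k=1}^n ∂ψ_iα/∂u_k = 0 for every i and α. -/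
/-!
With `vₖ = e^{-uₖ/2}`, extend `γ` to the diagonal by the same formula: `γ = v vᵀ / ‖v‖²` is a
rank-one projection, so `γᵢₖ γₖⱼ = γᵢⱼ γₖₖ` and `∑ₖ γₖₖ = 1`, and `ψ = 2γ - 1`. Differentiating,
`∂ψᵢⱼ/∂uₖ = γᵢⱼ (2γₖₖ - δᵢₖ - δⱼₖ)`. For `k ≠ i` the rank-one identity turns this into `γᵢₖ ψₖⱼ`,
and summing over `k` gives `γᵢⱼ (2 - 1 - 1) = 0`.
-/

open Real Finset Function

namespace DarbouxEgorov

variable {ι : Type*}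

lemma hasDerivAt_update_apply [DecidableEq ι] (u : ι → ℝ) (k m : ι) :
    HasDerivAt (fun t => update u k t m) (if m = k then 1 else 0) (u k) := by
  simpa only [Pi.single_apply] using hasDerivAt_pi.1 (hasDerivAt_update u k (u k)) m

variable [Fintype ι]

noncomputable def rotationCoeff (u : ι → ℝ) (i j : ι) : ℝ :=
  exp (-(u i + u j) / 2) / ∑ k, exp (-u k)

noncomputable def psi [DecidableEq ι] (u : ι → ℝ) (i j : ι) : ℝ :=
  2 * rotationCoeff u i j - if i = j then 1 else 0

noncomputable def psiPartialDeriv [DecidableEq ι] (u : ι → ℝ) (i j k : ι) : ℝ :=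
  rotationCoeff u i j *
    (2 * rotationCoeff u k k - (if i = k then 1 else 0) - (if j = k then 1 else 0))

lemma sum_exp_neg_pos [Nonempty ι] (u : ι → ℝ) : 0 < ∑ k, exp (-u k) :=
  Finset.sum_pos (fun _ _ => exp_pos _) univ_nonempty

lemma rotationCoeff_self (u : ι → ℝ) (k : ι) :
    rotationCoeff u k k = exp (-u k) / ∑ m, exp (-u m) := by
  rw [rotationCoeff, ← two_mul, neg_div, mul_div_cancel_left₀ _ two_ne_zero]

lemma sum_rotationCoeff_self [Nonempty ι] (u : ι → ℝ) : ∑ k, rotationCoeff u k k = 1 := by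
  simp only [rotationCoeff_self, ← Finset.sum_div]
  exact div_self (sum_exp_neg_pos u).ne'

lemma rotationCoeff_mul_rotationCoeff (u : ι → ℝ) (i j k : ι) :
    rotationCoeff u i k * rotationCoeff u k j = rotationCoeff u i j * rotationCoeff u k k := by
  simp only [rotationCoeff, div_mul_div_comm, ← exp_add]
  congr 2
  ring

variable [DecidableEq ι]

lemma psi_eq_ite (u : ι → ℝ) (i j : ι) :
    psi u i j =
      if i = j then 2 * exp (-u i) / (∑ k, exp (-u k)) - 1
      else 2 * exp (-(u i + u j) / 2) / ∑ k, exp (-u k) := by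
  split_ifs with hij
  · subst hij
    rw [psi, rotationCoeff_self, if_pos rfl, mul_div_assoc]
  · rw [psi, rotationCoeff, if_neg hij, sub_zero, mul_div_assoc]

lemma hasDerivAt_sum_exp_neg_update (u : ι → ℝ) (k : ι) :
    HasDerivAt (fun t => ∑ m, exp (-update u k t m)) (-exp (-u k)) (u k) := by
  simpa using HasDerivAt.fun_sum fun m (_ : m ∈ univ) => (hasDerivAt_update_apply u k m).neg.exp

lemma hasDerivAt_rotationCoeff_update (u : ι → ℝ) (i j k : ι) :
    HasDerivAt (fun t => rotationCoeff (update u k t) i j)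
      (rotationCoeff u i j *
        (rotationCoeff u k k - ((if i = k then 1 else 0) + (if j = k then 1 else 0)) / 2))
      (u k) := by
  have : Nonempty ι := ⟨k⟩
  have hnum := (((hasDerivAt_update_apply u k i).fun_add
    (hasDerivAt_update_apply u k j)).fun_neg.div_const 2).exp
  have hquot := hnum.fun_div (hasDerivAt_sum_exp_neg_update u k)
    (by simpa using (sum_exp_neg_pos u).ne')
  simp only [update_eq_self] at hquot
  refine hquot.congr_deriv ?_
  rw [rotationCoeff_self, rotationCoeff]
  field_simp
  ring

lemma hasDerivAt_psi_update (u : ι → ℝ) (i j k : ι) :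
    HasDerivAt (fun t => psi (update u k t) i j) (psiPartialDeriv u i j k) (u k) :=
  (((hasDerivAt_rotationCoeff_update u i j k).const_mul 2).sub_const
    (if i = j then (1 : ℝ) else 0)).congr_deriv (by rw [psiPartialDeriv]; ring)

lemma rotationCoeff_mul_psi {i k : ι} (hki : k ≠ i) (u : ι → ℝ) (j : ι) :
    rotationCoeff u i k * psi u k j = psiPartialDeriv u i j k := by
  rw [psi, psiPartialDeriv, mul_sub, mul_left_comm, rotationCoeff_mul_rotationCoeff,
    if_neg hki.symm]
  by_cases hkj : k = j
  · subst hkj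
    simp only [if_true]
    ring
  · rw [if_neg hkj, if_neg (Ne.symm hkj)]
    ring

lemma sum_psiPartialDeriv (u : ι → ℝ) (i j : ι) : ∑ k, psiPartialDeriv u i j k = 0 := by
  have : Nonempty ι := ⟨i⟩
  simp only [psiPartialDeriv]
  rw [← Finset.mul_sum, Finset.sum_sub_distrib, Finset.sum_sub_distrib, ← Finset.mul_sum,
    sum_rotationCoeff_self, Finset.sum_ite_eq, Finset.sum_ite_eq]
  norm_num

end DarbouxEgorov

open DarbouxEgorov in
/-- With `D(u) = ∑ₖ e^{-uₖ}`, `γ_ij(u) = e^{-(uᵢ+uⱼ)/2}/D(u)` for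
`i ≠ j`, and `ψ_ii = 2e^{-uᵢ}/D - 1`, `ψ_ij = 2e^{-(uᵢ+uⱼ)/2}/D` for `i ≠ j`,
one has, for every fixed column index `α` and all `i ≠ j`,
`∂ψ_iα/∂uⱼ = γ_ij ψ_jα`, and `∑ₖ ∂ψ_iα/∂uₖ = 0` for every `i` and `α`. -/
theorem stmt15 {n : ℕ} (γ ψ : (Fin n → ℝ) → Fin n → Fin n → ℝ)
    (hγ : ∀ u : Fin n → ℝ, ∀ i j : Fin n, i ≠ j →
      γ u i j = Real.exp (-(u i + u j) / 2) / ∑ k, Real.exp (-u k))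
    (hψ : ∀ u : Fin n → ℝ, ∀ i j : Fin n,
      ψ u i j =
        if i = j then 2 * Real.exp (-u i) / (∑ k, Real.exp (-u k)) - 1
        else 2 * Real.exp (-(u i + u j) / 2) / ∑ k, Real.exp (-u k)) :
    ∀ u : Fin n → ℝ, ∀ i α : Fin n,
      ∃ D : Fin n → ℝ,
        (∀ k : Fin n,
          HasDerivAt (fun t : ℝ => ψ (Function.update u k t) i α) (D k) (u k)) ∧
        (∀ k : Fin n, k ≠ i → D k = γ u i k * ψ u k α) ∧
        ∑ k, D k = 0 := by
  obtain rfl : ψ = psi := by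
    funext u i j
    rw [hψ, psi_eq_ite]
  intro u i α
  refine ⟨psiPartialDeriv u i α, hasDerivAt_psi_update u i α, fun k hki => ?_,
    sum_psiPartialDeriv u i α⟩
  rw [hγ u i k hki.symm]
  exact (rotationCoeff_mul_psi hki u α).symm
end
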